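/- Every quotient-closed full additive subcategory of representations of the linearly oriented quiver A_n equals C_a for some a ∈ M, i.e., its set of indecomposable objects is of the form {E^{ij} : i ≤ j < i + a_i} for a tuple (a_1,…,a_n) with 0 ≤ a_i ≤ n+1−i. -/

import Mathlib

/-! Quotient-closure applied to the truncations `E^{ij} ↠ E^{ij'}` (`i ≤ j' ≤ j`) shows that
every row `{j | (i, j) ∈ S}` is an initial segment of `[i, n)`; `a i` is its length. -/

open Classical

/-- A representation of a quiver (given by vertex type `ι`, arrow type `E`,
and source/target maps `s t : E → ι`) over a field `K`: a finite-dimensional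
`K`-vector space at each vertex and a linear map along each arrow. -/
structure QRep (K : Type) [Field K] {ι : Type} {E : Type} (s t : E → ι) : Type 1 where
  V : ι → Type
  [addV : ∀ i, AddCommGroup (V i)]
  [modV : ∀ i, Module K (V i)]
  [fdV : ∀ i, FiniteDimensional K (V i)]
  f : ∀ e : E, V (s e) →ₗ[K] V (t e)

attribute [instance] QRep.addV QRep.modV QRep.fdV

namespace QRep

variable {K : Type} [Field K] {ι E : Type} {s t : E → ι}

/-- A morphism of representations: linear maps at each vertex commuting with the arrow maps. -/
structure Hom (X Y : QRep K s t) : Type where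
  φ : ∀ i, X.V i →ₗ[K] Y.V i
  comm : ∀ e, (Y.f e).comp (φ (s e)) = (φ (t e)).comp (X.f e)

def Hom.Surjective {X Y : QRep K s t} (f : Hom X Y) : Prop := ∀ i, Function.Surjective (f.φ i)

def Hom.Injective {X Y : QRep K s t} (f : Hom X Y) : Prop := ∀ i, Function.Injective (f.φ i)

/-- Two representations are isomorphic if there is a morphism bijective at every vertex. -/
def Iso (X Y : QRep K s t) : Prop := ∃ f : Hom X Y, ∀ i, Function.Bijective (f.φ i)

/-- Direct sum of two representations, taken vertexwise. -/
def dsum (X Y : QRep K s t) : QRep K s t where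
  V i := X.V i × Y.V i
  f e := (X.f e).prodMap (Y.f e)

instance : Module.Finite K PUnit :=
  Module.Finite.of_surjective (0 : K →ₗ[K] PUnit) (fun x => ⟨0, Subsingleton.elim _ _⟩)

/-- The zero representation. -/
def zero : QRep K s t where
  V _ := PUnit
  f _ := 0

/-- A representation is zero if all its vector spaces are zero. -/
def IsZero (X : QRep K s t) : Prop := ∀ i, ∀ x : X.V i, x = 0

/-- Indecomposable: nonzero, and not isomorphic to a direct sum of two nonzero representations. -/
def Indec (X : QRep K s t) : Prop :=
  ¬ X.IsZero ∧ ∀ A B : QRep K s t, Iso X (A.dsum B) → A.IsZero ∨ B.IsZero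

/-- Direct sum of a finite list of representations. -/
noncomputable def dsumList : List (QRep K s t) → QRep K s t
  | [] => zero
  | X :: L => X.dsum (dsumList L)

/-- An extension `Y` of `Z` by `X`: an injective morphism `X → Y` and a surjective
morphism `Y → Z` whose vertexwise kernel is the image of `X`. -/
structure Extension (X Y Z : QRep K s t) : Type where
  incl : Hom X Y
  proj : Hom Y Z
  inj : ∀ i, Function.Injective (incl.φ i)
  surj : ∀ i, Function.Surjective (proj.φ i)
  exact : ∀ i, LinearMap.ker (proj.φ i) = LinearMap.range (incl.φ i)

/-- An extension is trivial (split) if there is a morphism `Y → X` restricting to the identity on `X`. -/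
def Extension.Trivial {X Y Z : QRep K s t} (E : Extension X Y Z) : Prop :=
  ∃ r : Hom Y X, ∀ i x, r.φ i (E.incl.φ i x) = x

/-- A subrepresentation of `Y`: a subspace at each vertex, stable under the arrow maps. -/
structure Sub (Y : QRep K s t) : Type where
  p : ∀ i, Submodule K (Y.V i)
  stable : ∀ e, ∀ x ∈ p (s e), Y.f e x ∈ p (t e)

def Sub.toRep {Y : QRep K s t} (S : Sub Y) : QRep K s t where
  V i := S.p i
  f e := (Y.f e).restrict (S.stable e)

/-- The quotient representation `Y/X`. -/
def Sub.quot {Y : QRep K s t} (S : Sub Y) : QRep K s t where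
  V i := Y.V i ⧸ S.p i
  f e := Submodule.mapQ (S.p (s e)) (S.p (t e)) (Y.f e) (fun x hx => S.stable e x hx)

/-- The inclusion morphism of a subrepresentation. -/
def Sub.incl {Y : QRep K s t} (S : Sub Y) : Hom S.toRep Y where
  φ i := (S.p i).subtype
  comm e := by ext x; rfl

/-- The quotient morphism onto the quotient representation. -/
def Sub.mkQ {Y : QRep K s t} (S : Sub Y) : Hom Y S.quot where
  φ i := (S.p i).mkQ
  comm e := by ext x; first | rfl | (simp only [LinearMap.comp_apply, Submodule.mkQ_apply]; exact Submodule.mapQ_apply _ _ _ _)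

/-- The space of morphisms between two representations, as a subspace of the product of Hom spaces. -/
def HomSpace (X Y : QRep K s t) : Submodule K (∀ i, X.V i →ₗ[K] Y.V i) where
  carrier := {φ | ∀ e, (Y.f e).comp (φ (s e)) = (φ (t e)).comp (X.f e)}
  add_mem' := by
    intro a b ha hb e
    simp only [Set.mem_setOf_eq] at ha hb
    simp [LinearMap.comp_add, LinearMap.add_comp, ha e, hb e]
  zero_mem' := by intro e; simp
  smul_mem' := by
    intro c a ha e
    simp only [Set.mem_setOf_eq] at ha
    simp [LinearMap.comp_smul, LinearMap.smul_comp, ha e]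

end QRep
/-- The source of the `e`-th arrow of the linearly oriented quiver `Aₙ`
(vertices `0,…,n-1`, arrows `e → e+1` for `0 ≤ e < n-1`; 0-based indexing). -/
def ASrc (n : ℕ) (e : Fin (n - 1)) : Fin n := ⟨e.val, by have := e.isLt; omega⟩

/-- The target of the `e`-th arrow of `Aₙ`. -/
def ATgt (n : ℕ) (e : Fin (n - 1)) : Fin n := ⟨e.val + 1, by have := e.isLt; omega⟩

/-- Representations of the linearly oriented quiver `Aₙ`. -/
abbrev ARep (K : Type) [Field K] (n : ℕ) := QRep K (ASrc n) (ATgt n)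

/-- The canonical map from `M` to a submodule `T`: the identity if `T = ⊤`, zero otherwise. -/
noncomputable def toSub {K M : Type} [Field K] [AddCommGroup M] [Module K M]
    (T : Submodule K M) : M →ₗ[K] T :=
  if h : T = ⊤ then LinearMap.codRestrict T LinearMap.id (fun x => by simp [h]) else 0

/-- The vertex spaces of the interval representation `E^{ij}`: `K` for `i ≤ p ≤ j`, zero otherwise. -/
def ESub (K : Type) [Field K] (n i j : ℕ) (p : Fin n) : Submodule K K :=
  if i ≤ p.val ∧ p.val ≤ j then ⊤ else ⊥

/-- The interval representation `E^{ij}` of `Aₙ` (0-based): one-dimensional spaces at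
vertices `i,…,j`, identity maps between consecutive ones, zero elsewhere. -/
noncomputable def Eij (K : Type) [Field K] (n i j : ℕ) : ARep K n where
  V p := ESub K n i j p
  f e := (toSub (ESub K n i j (ATgt n e))).comp (ESub K n i j (ASrc n e)).subtype

/-- Direct sum of interval representations indexed by a list of pairs. -/
noncomputable def intervalSum (K : Type) [Field K] (n : ℕ) (L : List (ℕ × ℕ)) : ARep K n :=
  QRep.dsumList (L.map fun pr => Eij K n pr.1 pr.2)

/-- A full additive subcategory of `rep Aₙ`, given by its set `S` of indecomposables
(pairs `(i,j)` standing for `E^{ij}`), is quotient-closed: whenever a direct sum of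
intervals from `S` surjects onto a direct sum of intervals, all the latter intervals lie in `S`. -/
def QuotClosedSet (K : Type) [Field K] (n : ℕ) (S : Set (ℕ × ℕ)) : Prop :=
  ∀ L : List (ℕ × ℕ), (∀ pr ∈ L, pr ∈ S) →
    ∀ L' : List (ℕ × ℕ), (∀ pr ∈ L', pr.1 ≤ pr.2 ∧ pr.2 < n) →
      (∃ f : QRep.Hom (intervalSum K n L) (intervalSum K n L'), f.Surjective) →
      ∀ pr ∈ L', pr ∈ S

namespace QRep

variable {K : Type} [Field K] {ι E : Type} {s t : E → ι}

def Hom.id (X : QRep K s t) : Hom X X where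
  φ _ := LinearMap.id
  comm _ := rfl

def Hom.dsumMap {X X' Y Y' : QRep K s t} (f : Hom X X') (g : Hom Y Y') :
    Hom (X.dsum Y) (X'.dsum Y') where
  φ i := (f.φ i).prodMap (g.φ i)
  comm e := LinearMap.ext fun x =>
    Prod.ext (LinearMap.congr_fun (f.comm e) x.1) (LinearMap.congr_fun (g.comm e) x.2)

theorem Hom.id_surjective (X : QRep K s t) : (Hom.id X).Surjective :=
  fun _ => Function.surjective_id

theorem Hom.Surjective.dsumMap {X X' Y Y' : QRep K s t} {f : Hom X X'} {g : Hom Y Y'}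
    (hf : f.Surjective) (hg : g.Surjective) : (f.dsumMap g).Surjective :=
  fun i => (hf i).prodMap (hg i)

end QRep

section Intervals

variable {K : Type} [Field K]

theorem coe_toSub {M : Type} [AddCommGroup M] [Module K M] (T : Submodule K M) (x : M) :
    (toSub T x : M) = if T = ⊤ then x else 0 := by
  unfold toSub
  split <;> simp_all

theorem ESub_eq_top_iff {n i j : ℕ} {p : Fin n} : ESub K n i j p = ⊤ ↔ i ≤ p.val ∧ p.val ≤ j := by
  unfold ESub
  split_ifs with h
  · exact iff_of_true rfl h
  · exact iff_of_false bot_ne_top h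

theorem eq_zero_of_mem_ESub {n i j : ℕ} {p : Fin n} (h : ¬ (i ≤ p.val ∧ p.val ≤ j))
    {x : K} (hx : x ∈ ESub K n i j p) : x = 0 := by
  rwa [ESub, if_neg h, Submodule.mem_bot] at hx

noncomputable def Eij.truncate (n i j j' : ℕ) (hj : j' ≤ j) :
    QRep.Hom (Eij K n i j) (Eij K n i j') where
  φ p := (toSub (ESub K n i j' p)).comp (ESub K n i j p).subtype
  comm e := by
    refine LinearMap.ext fun (x : ESub K n i j (ASrc n e)) => Subtype.ext ?_
    show (toSub (ESub K n i j' (ATgt n e)) (toSub (ESub K n i j' (ASrc n e)) (x : K)) : K)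
        = toSub (ESub K n i j' (ATgt n e)) (toSub (ESub K n i j (ATgt n e)) (x : K))
    have hsrc : (ASrc n e).val = e.val := rfl
    have htgt : (ATgt n e).val = e.val + 1 := rfl
    by_cases hx : i ≤ e.val ∧ e.val ≤ j
    · simp only [coe_toSub, ESub_eq_top_iff, hsrc, htgt]
      split_ifs <;> first | rfl | omega
    · simp [eq_zero_of_mem_ESub (p := ASrc n e) (by rwa [hsrc]) x.2]

theorem Eij.truncate_surjective (n i j j' : ℕ) (hj : j' ≤ j) :
    (Eij.truncate (K := K) n i j j' hj).Surjective := by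
  intro p (z : ESub K n i j' p)
  by_cases h : i ≤ p.val ∧ p.val ≤ j'
  · refine ⟨⟨z, (ESub_eq_top_iff (K := K)).2 ⟨h.1, h.2.trans hj⟩ ▸ Submodule.mem_top⟩, Subtype.ext ?_⟩
    show (toSub (ESub K n i j' p) (z : K) : K) = z
    rw [coe_toSub, if_pos (ESub_eq_top_iff.2 h)]
  · exact ⟨0, by rw [map_zero]; exact Subtype.ext (eq_zero_of_mem_ESub h z.2).symm⟩

theorem QuotClosedSet.mem_of_le {n : ℕ} {S : Set (ℕ × ℕ)} (hq : QuotClosedSet K n S)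
    {i j j' : ℕ} (hij : (i, j) ∈ S) (hij' : i ≤ j') (hj : j' ≤ j) (hjn : j < n) :
    (i, j') ∈ S :=
  hq [(i, j)] (by simpa using hij) [(i, j')] (by simp; omega)
    ⟨(Eij.truncate (K := K) n i j j' hj).dsumMap (QRep.Hom.id _),
      (Eij.truncate_surjective n i j j' hj).dsumMap (QRep.Hom.id_surjective _)⟩ _
    (List.mem_singleton_self _)

end Intervals

theorem exists_eq_setOf_lt_add_of_mem_of_le {n : ℕ} {S : Set (ℕ × ℕ)}
    (hS : ∀ pr ∈ S, pr.1 ≤ pr.2 ∧ pr.2 < n)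
    (hdown : ∀ {i j j'}, (i, j) ∈ S → i ≤ j' → j' ≤ j → (i, j') ∈ S) :
    ∃ a : ℕ → ℕ, (∀ i < n, a i ≤ n - i) ∧
      S = {pr : ℕ × ℕ | pr.1 ≤ pr.2 ∧ pr.2 < n ∧ pr.2 < pr.1 + a pr.1} := by
  let a i := Nat.findGreatest (fun k => ∀ j, i ≤ j → j < i + k → (i, j) ∈ S) (n - i)
  refine ⟨a, fun i _ => Nat.findGreatest_le _, Set.ext fun ⟨i, j⟩ => ⟨fun hmem => ?_, ?_⟩⟩
  · obtain ⟨hij, hjn⟩ : i ≤ j ∧ j < n := hS _ hmem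
    have : j + 1 - i ≤ a i :=
      Nat.le_findGreatest (by omega) fun j' hj' hj'j => hdown hmem hj' (by omega)
    show i ≤ j ∧ j < n ∧ j < i + a i
    omega
  · rintro ⟨hij, -, hja⟩
    exact Nat.findGreatest_spec (P := fun k => ∀ j, i ≤ j → j < i + k → (i, j) ∈ S)
      (Nat.zero_le _) (fun _ _ h => absurd h (by omega)) j hij hja

/-- every quotient-closed full additive subcategory of `rep Aₙ` (given by its
set `S` of indecomposables, i.e. of interval pairs) is of the form `C_a`: there is a tuple
`a` with `a i ≤ n - i` (0-based) such that `S = {(i,j) : i ≤ j < i + a i}`. -/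
theorem stmt10 (K : Type) [Field K] (n : ℕ) (S : Set (ℕ × ℕ))
    (hS : ∀ pr ∈ S, pr.1 ≤ pr.2 ∧ pr.2 < n) (hq : QuotClosedSet K n S) :
    ∃ a : ℕ → ℕ, (∀ i < n, a i ≤ n - i) ∧
      S = {pr : ℕ × ℕ | pr.1 ≤ pr.2 ∧ pr.2 < n ∧ pr.2 < pr.1 + a pr.1} :=
  exists_eq_setOf_lt_add_of_mem_of_le hS fun hij hij' hj => hq.mem_of_le hij hij' hj (hS _ hij).2
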